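/- Let G be a group in which the word w_o takes exactly m values. If Q is any quotient of G in which w_o(Q)' = 1 and Q/w_o(Q) is abelian, then Q is metabelian and the number of commutators in Q is at most m. -/

import Mathlib

open scoped commutatorElement

/-- The auxiliary word `v(x,y) = [[x^d, y^d]^d, [y^d, x^{-d}]^d]`. -/
def vWord {G : Type*} [Group G] (d : ℕ) (x y : G) : G :=
  ⁅⁅x ^ d, y ^ d⁆ ^ d, ⁅y ^ d, (x⁻¹) ^ d⁆ ^ d⁆

/-- The signs `ε_i` in Olshanskii's word, with `ε_0 = 1`. -/
def eps (i : ℕ) : ℤ :=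
  if i = 0 ∨ i % 10 = 1 ∨ i % 10 = 2 ∨ i % 10 = 3 ∨ i % 10 = 5 ∨ i % 10 = 6 then 1 else -1

/-- Olshanskii's word
`w_o(x,y) = [x,y] v(x,y)^n [x,y]^{ε_1} v(x,y)^{n+1} ⋯ [x,y]^{ε_{h-1}} v(x,y)^{n+h-1}`. -/
def wo {G : Type*} [Group G] (d n h : ℕ) (x y : G) : G :=
  ((List.range h).map fun i => ⁅x, y⁆ ^ eps i * vWord d x y ^ (n + i)).prod

/-- The set of `w_o`-values in `G`. -/
def woValues (G : Type*) [Group G] (d n h : ℕ) : Set G :=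
  {g : G | ∃ x y : G, wo d n h x y = g}

lemma map_wo {G Q : Type*} [Group G] [Group Q] (φ : G →* Q) (d n h : ℕ) (x y : G) :
    φ (wo d n h x y) = wo d n h (φ x) (φ y) := by
  unfold wo
  rw [map_list_prod, List.map_map]
  congr 1
  ext i
  simp [vWord, map_commutatorElement, map_zpow, map_pow, map_mul]

lemma sum_eps (q : ℕ) : ∑ i ∈ Finset.range (10 * q + 1), eps i = 1 := by
  induction q with
  | zero => simp [eps]
  | succ q ih =>
    have : 10 * (q + 1) + 1 = (10 * q + 1) + 10 := by ring
    rw [this]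
    rw [Finset.sum_range_succ, Finset.sum_range_succ, Finset.sum_range_succ,
      Finset.sum_range_succ, Finset.sum_range_succ, Finset.sum_range_succ,
      Finset.sum_range_succ, Finset.sum_range_succ, Finset.sum_range_succ,
      Finset.sum_range_succ, ih]
    have e : ∀ j : ℕ, eps (10 * q + 1 + j) =
        if (10 * q + 1 + j) % 10 = 1 ∨ (10 * q + 1 + j) % 10 = 2 ∨ (10 * q + 1 + j) % 10 = 3
          ∨ (10 * q + 1 + j) % 10 = 5 ∨ (10 * q + 1 + j) % 10 = 6 then 1 else -1 := by
      intro j; unfold eps; split <;> split <;> omega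
    rw [e 0, e 1, e 2, e 3, e 4, e 5, e 6, e 7, e 8, e 9]
    have m0 : (10 * q + 1 + 0) % 10 = 1 := by omega
    have m1 : (10 * q + 1 + 1) % 10 = 2 := by omega
    have m2 : (10 * q + 1 + 2) % 10 = 3 := by omega
    have m3 : (10 * q + 1 + 3) % 10 = 4 := by omega
    have m4 : (10 * q + 1 + 4) % 10 = 5 := by omega
    have m5 : (10 * q + 1 + 5) % 10 = 6 := by omega
    have m6 : (10 * q + 1 + 6) % 10 = 7 := by omega
    have m7 : (10 * q + 1 + 7) % 10 = 8 := by omega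
    have m8 : (10 * q + 1 + 8) % 10 = 9 := by omega
    have m9 : (10 * q + 1 + 9) % 10 = 0 := by omega
    simp [m0, m1, m2, m3, m4, m5, m6, m7, m8, m9]


/-- If `w_o` takes exactly `m` values in `G` and `Q` is a quotient of `G`
such that `w_o(Q)` is abelian and `Q/w_o(Q)` is abelian (i.e. all commutators of `Q` lie
in `w_o(Q)`), then `Q` is metabelian and has at most `m` commutators. -/
theorem stmt17 {G : Type*} [Group G] (d n h : ℕ) (hd : 0 < d) (hn : 0 < n)
    (hh : h % 10 = 1) (hh' : 50000 < h) (m : ℕ)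
    (hfin : (woValues G d n h).Finite) (hm : Nat.card (woValues G d n h) = m)
    {Q : Type*} [Group Q] (φ : G →* Q) (hφ : Function.Surjective φ)
    (habW : ∀ a ∈ Subgroup.closure (woValues Q d n h),
      ∀ b ∈ Subgroup.closure (woValues Q d n h), a * b = b * a)
    (habQ : ∀ x y : Q, ⁅x, y⁆ ∈ Subgroup.closure (woValues Q d n h)) :
    derivedSeries Q 2 = ⊥ ∧ {c : Q | ∃ x y : Q, ⁅x, y⁆ = c}.Finite ∧
      Nat.card {c : Q | ∃ x y : Q, ⁅x, y⁆ = c} ≤ m := by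
  set H := Subgroup.closure (woValues Q d n h) with hH
  -- commutators of elements of H vanish
  have hcomm1 : ∀ a ∈ H, ∀ b ∈ H, ⁅a, b⁆ = 1 := by
    intro a ha b hb
    rw [commutatorElement_eq_one_iff_mul_comm]
    exact habW a ha b hb
  -- vWord vanishes in Q
  have hv : ∀ x y : Q, vWord d x y = 1 := by
    intro x y
    apply hcomm1
    · exact Subgroup.pow_mem _ (habQ _ _) d
    · exact Subgroup.pow_mem _ (habQ _ _) d
  -- wo = commutator in Q
  have hwo : ∀ x y : Q, wo d n h x y = ⁅x, y⁆ := by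
    intro x y
    have key : ∀ k : ℕ, ((List.range k).map fun i => ⁅x, y⁆ ^ eps i * vWord d x y ^ (n + i)).prod
        = ⁅x, y⁆ ^ (∑ i ∈ Finset.range k, eps i) := by
      intro k
      induction k with
      | zero => simp
      | succ k ih =>
        rw [List.range_succ, List.map_append, List.prod_append, ih, Finset.sum_range_succ,
          zpow_add]
        simp [hv]
    obtain ⟨q, hq⟩ : ∃ q, h = 10 * q + 1 := ⟨h / 10, by omega⟩
    rw [wo, key, hq, sum_eps, zpow_one]
  -- woValues Q = commutator set of Q
  have hset : woValues Q d n h = {c : Q | ∃ x y : Q, ⁅x, y⁆ = c} := by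
    ext c
    constructor
    · rintro ⟨x, y, rfl⟩; exact ⟨x, y, (hwo x y).symm⟩
    · rintro ⟨x, y, rfl⟩; exact ⟨x, y, hwo x y⟩
  -- woValues Q = φ '' woValues G
  have himg : woValues Q d n h = φ '' woValues G d n h := by
    ext c
    constructor
    · rintro ⟨x, y, rfl⟩
      obtain ⟨a, rfl⟩ := hφ x
      obtain ⟨b, rfl⟩ := hφ y
      exact ⟨wo d n h a b, ⟨a, b, rfl⟩, map_wo φ d n h a b⟩
    · rintro ⟨g, ⟨a, b, rfl⟩, rfl⟩
      exact ⟨φ a, φ b, (map_wo φ d n h a b).symm⟩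
  -- metabelian
  have hmeta : derivedSeries Q 2 = ⊥ := by
    have h1 : derivedSeries Q 2 = ⁅commutator Q, commutator Q⁆ := by
      rw [show (2 : ℕ) = 1 + 1 from rfl, derivedSeries_succ, derivedSeries_one]
    rw [h1, Subgroup.commutator_eq_bot_iff_le_centralizer]
    have hle : commutator Q ≤ H := by
      rw [commutator_def, Subgroup.commutator_le]
      intro g₁ _ g₂ _
      exact habQ g₁ g₂
    intro a ha
    rw [Subgroup.mem_centralizer_iff]
    intro b hb
    exact habW b (hle hb) a (hle ha)
  refine ⟨hmeta, ?_, ?_⟩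
  · rw [← hset, himg]; exact hfin.image φ
  · rw [← hset, himg]
    calc Nat.card (φ '' woValues G d n h) ≤ Nat.card (woValues G d n h) :=
          Nat.card_image_le hfin
      _ = m := hm
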